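/- arXiv:2205.15213 — 4 statements merged into one kernel-verified Lean document; each statement's English description precedes it below -/
import Mathlib

section
/- Let Y be a finite nonempty subset of ℝⁿ, ω ∈ ℝⁿ, g ∈ ℝⁿ, and fix y₀ ∈ M(ω). For a step size α > 0 let ω_k = ω + k·α·g. Then: (i) if the better-solution set B = {y ∈ Y : ⟨y − y₀, g⟩ < 0} is nonempty, there exists α_max > 0 such that for every α with 0 < α < α_max there exists n ≥ 1 with y₀ ∈ M(ω_k) for all k < n, y₀ ∉ M(ω_n), and every minimizer y ∈ M(ω_n) satisfies ⟨y − y₀, g⟩ < 0 (i.e. M(ω_n) ⊆ B); and (ii) if B is empty, then for every α > 0 and every k ∈ ℕ, y₀ ∈ M(ω_k). -/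
open scoped InnerProductSpace

/-- The solver's argmin set `M(ω) = {y ∈ Y : ⟨ω, y⟩ ≤ ⟨ω, y'⟩ for all y' ∈ Y}`. -/
def argminSet {n : ℕ} (Y : Finset (EuclideanSpace ℝ (Fin n)))
    (ω : EuclideanSpace ℝ (Fin n)) : Set (EuclideanSpace ℝ (Fin n)) :=
  {y | y ∈ Y ∧ ∀ y' ∈ Y, ⟪ω, y⟫_ℝ ≤ ⟪ω, y'⟫_ℝ}

theorem identity_update_reaches_better_solution {n : ℕ}
    (Y : Finset (EuclideanSpace ℝ (Fin n))) (hY : Y.Nonempty)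
    (ω g y₀ : EuclideanSpace ℝ (Fin n)) (hy₀ : y₀ ∈ argminSet Y ω) :
    (({y : EuclideanSpace ℝ (Fin n) | y ∈ Y ∧ ⟪y - y₀, g⟫_ℝ < 0}).Nonempty →
      ∃ αmax : ℝ, 0 < αmax ∧ ∀ α : ℝ, 0 < α → α < αmax →
        ∃ m : ℕ, 1 ≤ m ∧
          (∀ k < m, y₀ ∈ argminSet Y (ω + ((k : ℝ) * α) • g)) ∧
          y₀ ∉ argminSet Y (ω + ((m : ℝ) * α) • g) ∧
          ∀ y ∈ argminSet Y (ω + ((m : ℝ) * α) • g), ⟪y - y₀, g⟫_ℝ < 0) ∧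
    ({y : EuclideanSpace ℝ (Fin n) | y ∈ Y ∧ ⟪y - y₀, g⟫_ℝ < 0} = ∅ →
      ∀ α : ℝ, 0 < α → ∀ k : ℕ, y₀ ∈ argminSet Y (ω + ((k : ℝ) * α) • g)) := by
  classical
  have hexp : ∀ (t : ℝ) (y : EuclideanSpace ℝ (Fin n)),
      ⟪ω + t • g, y⟫_ℝ = ⟪ω, y⟫_ℝ + t * ⟪g, y⟫_ℝ := by
    intro t y
    rw [inner_add_left, real_inner_smul_left]
  have hsub : ∀ y : EuclideanSpace ℝ (Fin n),
      ⟪y - y₀, g⟫_ℝ = ⟪g, y⟫_ℝ - ⟪g, y₀⟫_ℝ := by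
    intro y
    rw [inner_sub_left, real_inner_comm y g, real_inner_comm y₀ g]
  obtain ⟨hy₀Y, hy₀min⟩ := hy₀
  -- key lemma: at a positive time where y₀ is not a minimizer, all minimizers are in B
  have key : ∀ (t : ℝ), 0 < t → y₀ ∉ argminSet Y (ω + t • g) →
      ∀ y ∈ argminSet Y (ω + t • g), ⟪y - y₀, g⟫_ℝ < 0 := by
    intro t ht hy₀out y hy
    obtain ⟨hyY, hymin⟩ := hy
    have hnot : ¬ ∀ y' ∈ Y, ⟪ω + t • g, y₀⟫_ℝ ≤ ⟪ω + t • g, y'⟫_ℝ :=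
      fun h => hy₀out ⟨hy₀Y, h⟩
    push_neg at hnot
    obtain ⟨y', hy'Y, hy'lt⟩ := hnot
    have h1 := hymin y' hy'Y
    have h2 := hy₀min y hyY
    rw [hexp, hexp] at h1
    rw [hexp, hexp] at hy'lt
    rw [hsub]
    nlinarith
  constructor
  · rintro ⟨y₁, hy₁Y, hy₁b⟩
    refine ⟨1, one_pos, fun α hα _ => ?_⟩
    have hb₁ : ⟪g, y₁⟫_ℝ - ⟪g, y₀⟫_ℝ < 0 := by rw [← hsub]; exact hy₁b
    have hex : ∃ m : ℕ, y₀ ∉ argminSet Y (ω + ((m : ℝ) * α) • g) := by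
      have hc : (0:ℝ) < α * (⟪g, y₀⟫_ℝ - ⟪g, y₁⟫_ℝ) := by nlinarith
      obtain ⟨m, hm⟩ := exists_nat_gt
        ((⟪ω, y₁⟫_ℝ - ⟪ω, y₀⟫_ℝ) / (α * (⟪g, y₀⟫_ℝ - ⟪g, y₁⟫_ℝ)))
      refine ⟨m, fun hmem => ?_⟩
      have hle := hmem.2 y₁ hy₁Y
      rw [hexp, hexp] at hle
      have hd := (div_lt_iff₀ hc).mp hm
      nlinarith
    set m := Nat.find hex with hmdef
    have hPm : y₀ ∉ argminSet Y (ω + ((m : ℝ) * α) • g) := Nat.find_spec hex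
    have hm0 : m ≠ 0 := by
      intro h
      rw [h] at hPm
      apply hPm
      simp only [Nat.cast_zero, zero_mul, zero_smul, add_zero]
      exact ⟨hy₀Y, hy₀min⟩
    have hm1 : 1 ≤ m := Nat.one_le_iff_ne_zero.mpr hm0
    have htpos : (0:ℝ) < (m : ℝ) * α := by
      have : (0:ℝ) < (m : ℝ) := by exact_mod_cast Nat.pos_of_ne_zero hm0
      positivity
    exact ⟨m, hm1, fun k hk => not_not.mp (Nat.find_min hex hk), hPm,
      key _ htpos hPm⟩
  · intro hB α hα k
    have hge : ∀ y ∈ Y, ⟪g, y₀⟫_ℝ ≤ ⟪g, y⟫_ℝ := by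
      intro y hyY
      by_contra h
      have hmem : y ∈ {y : EuclideanSpace ℝ (Fin n) | y ∈ Y ∧ ⟪y - y₀, g⟫_ℝ < 0} :=
        ⟨hyY, by rw [hsub]; linarith⟩
      rw [hB] at hmem
      exact hmem
    refine ⟨hy₀Y, fun y' hy' => ?_⟩
    rw [hexp, hexp]
    have h1 := hy₀min y' hy'
    have h2 := hge y' hy'
    have hk : (0:ℝ) ≤ (k:ℝ) * α := by positivity
    nlinarith
end

section
/- Let Y be a finite nonempty subset of ℝⁿ, ω ∈ ℝⁿ, g ∈ ℝⁿ, and y₀ ∈ M(ω). Exactly one of the following holds: either for every α > 0 and every k ∈ ℕ one has y₀ ∈ M(ω + k·α·g); or there exists α_max > 0 such that for every α with 0 < α < α_max there exists n ≥ 1 with y₀ ∈ M(ω + k·α·g) for all k < n and y₀ ∉ M(ω + n·α·g). -/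
open scoped InnerProductSpace

theorem identity_update_dichotomy {n : ℕ}
    (Y : Finset (EuclideanSpace ℝ (Fin n))) (hY : Y.Nonempty)
    (ω g y₀ : EuclideanSpace ℝ (Fin n)) (hy₀ : y₀ ∈ argminSet Y ω) :
    Xor'
      (∀ α : ℝ, 0 < α → ∀ k : ℕ, y₀ ∈ argminSet Y (ω + ((k : ℝ) * α) • g))
      (∃ αmax : ℝ, 0 < αmax ∧ ∀ α : ℝ, 0 < α → α < αmax →
        ∃ m : ℕ, 1 ≤ m ∧
          (∀ k < m, y₀ ∈ argminSet Y (ω + ((k : ℝ) * α) • g)) ∧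
          y₀ ∉ argminSet Y (ω + ((m : ℝ) * α) • g)) := by
  obtain ⟨hy₀Y, hy₀min⟩ := hy₀
  have hexp : ∀ (t : ℝ) (y : EuclideanSpace ℝ (Fin n)),
      ⟪ω + t • g, y⟫_ℝ = ⟪ω, y⟫_ℝ + t * ⟪g, y⟫_ℝ := by
    intro t y
    rw [inner_add_left, real_inner_smul_left]
  set S := Y.filter (fun y' => ⟪g, y'⟫_ℝ < ⟪g, y₀⟫_ℝ) with hS
  by_cases hSe : S.Nonempty
  · -- Case B: some direction strictly improves along g; y₀ eventually leaves the argmin set.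
    obtain ⟨ys, hysS, hysmin⟩ := S.exists_min_image
      (fun y' => (⟪ω, y'⟫_ℝ - ⟪ω, y₀⟫_ℝ) / (⟪g, y₀⟫_ℝ - ⟪g, y'⟫_ℝ)) hSe
    obtain ⟨hysY, hysg⟩ := Finset.mem_filter.mp hysS
    set T := (⟪ω, ys⟫_ℝ - ⟪ω, y₀⟫_ℝ) / (⟪g, y₀⟫_ℝ - ⟪g, ys⟫_ℝ) with hT
    have hTnonneg : 0 ≤ T :=
      div_nonneg (by linarith [hy₀min ys hysY]) (by linarith)
    have key : ∀ t : ℝ, 0 ≤ t → (y₀ ∈ argminSet Y (ω + t • g) ↔ t ≤ T) := by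
      intro t ht
      constructor
      · intro hmem
        have h1 := hmem.2 ys hysY
        rw [hexp, hexp] at h1
        rw [hT, le_div_iff₀ (by linarith)]
        nlinarith
      · intro htT
        refine ⟨hy₀Y, fun y' hy' => ?_⟩
        rw [hexp, hexp]
        by_cases hb : ⟪g, y'⟫_ℝ < ⟪g, y₀⟫_ℝ
        · have hy'S : y' ∈ S := Finset.mem_filter.mpr ⟨hy', hb⟩
          have h2 : t ≤ (⟪ω, y'⟫_ℝ - ⟪ω, y₀⟫_ℝ) / (⟪g, y₀⟫_ℝ - ⟪g, y'⟫_ℝ) :=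
            le_trans htT (hysmin y' hy'S)
          rw [le_div_iff₀ (by linarith)] at h2
          nlinarith
        · push_neg at hb
          have := hy₀min y' hy'
          nlinarith
    right
    constructor
    · refine ⟨1, one_pos, fun α hα _ => ?_⟩
      refine ⟨⌊T / α⌋₊ + 1, Nat.le_add_left 1 _, ?_, ?_⟩
      · intro k hk
        have hk' : k ≤ ⌊T / α⌋₊ := Nat.lt_succ_iff.mp hk
        have hkr : (k : ℝ) ≤ T / α :=
          le_trans (Nat.cast_le.mpr hk') (Nat.floor_le (div_nonneg hTnonneg hα.le))
        have hkt : (k : ℝ) * α ≤ T := by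
          rw [← le_div_iff₀ hα] at *
          exact hkr
        exact (key _ (mul_nonneg (Nat.cast_nonneg k) hα.le)).mpr hkt
      · intro hmem
        have hlt : T / α < ((⌊T / α⌋₊ + 1 : ℕ) : ℝ) := by
          push_cast
          exact Nat.lt_floor_add_one _
        have hlt' : T < ((⌊T / α⌋₊ + 1 : ℕ) : ℝ) * α := by
          rw [div_lt_iff₀ hα] at hlt
          linarith
        have := (key _ (mul_nonneg (Nat.cast_nonneg _) hα.le)).mp hmem
        linarith
    · intro hfirst
      have h1 := hfirst (T + 1) (by linarith) 1
      have h2 := (key ((1 : ℕ) * (T + 1)) (by push_cast; linarith)).mp h1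
      push_cast at h2
      linarith
  · -- Case A: g doesn't strictly improve any competitor; y₀ stays a minimizer forever.
    have hge : ∀ y' ∈ Y, ⟪g, y₀⟫_ℝ ≤ ⟪g, y'⟫_ℝ := by
      intro y' hy'
      by_contra hlt
      push_neg at hlt
      exact hSe ⟨y', Finset.mem_filter.mpr ⟨hy', hlt⟩⟩
    have hfirst : ∀ α : ℝ, 0 < α → ∀ k : ℕ,
        y₀ ∈ argminSet Y (ω + ((k : ℝ) * α) • g) := by
      intro α hα k
      refine ⟨hy₀Y, fun y' hy' => ?_⟩
      rw [hexp, hexp]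
      have h1 := hy₀min y' hy'
      have h2 := hge y' hy'
      have ht : (0 : ℝ) ≤ (k : ℝ) * α := mul_nonneg (Nat.cast_nonneg k) hα.le
      nlinarith
    left
    refine ⟨hfirst, ?_⟩
    rintro ⟨αmax, hαmax, hsec⟩
    obtain ⟨m, _, _, hnot⟩ := hsec (αmax / 2) (by linarith) (by linarith)
    exact hnot (hfirst (αmax / 2) (by linarith) m)
end

section
/- Let Y be a finite nonempty subset of ℝⁿ, ω ∈ ℝⁿ, g ∈ ℝⁿ, t > 0, and y₀ ∈ M(ω). If y ∈ M(ω + t·g), then ⟨y − y₀, g⟩ ≤ 0; moreover, if additionally y₀ ∉ M(ω + t·g), then ⟨y − y₀, g⟩ < 0, i.e. the new solution has strictly lower linearized loss f(y) = ℓ(y₀) + ⟨y − y₀, g⟩ than y₀. -/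
open scoped InnerProductSpace

theorem new_solution_has_lower_linearized_loss {n : ℕ}
    (Y : Finset (EuclideanSpace ℝ (Fin n))) (hY : Y.Nonempty)
    (ω g y₀ y : EuclideanSpace ℝ (Fin n)) (t : ℝ) (ht : 0 < t)
    (hy₀ : y₀ ∈ argminSet Y ω) (hy : y ∈ argminSet Y (ω + t • g)) :
    ⟪y - y₀, g⟫_ℝ ≤ 0 ∧ (y₀ ∉ argminSet Y (ω + t • g) → ⟪y - y₀, g⟫_ℝ < 0) := by
  obtain ⟨hy₀Y, hmin₀⟩ := hy₀
  obtain ⟨hyY, hminy⟩ := hy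
  have h1 : ⟪ω + t • g, y⟫_ℝ ≤ ⟪ω + t • g, y₀⟫_ℝ := hminy y₀ hy₀Y
  have h2 : ⟪ω, y₀⟫_ℝ ≤ ⟪ω, y⟫_ℝ := hmin₀ y hyY
  have expand : ∀ z : EuclideanSpace ℝ (Fin n),
      ⟪ω + t • g, z⟫_ℝ = ⟪ω, z⟫_ℝ + t * ⟪g, z⟫_ℝ := by
    intro z
    rw [inner_add_left, real_inner_smul_left]
  rw [expand, expand] at h1
  have key : ⟪y - y₀, g⟫_ℝ = (⟪g, y⟫_ℝ - ⟪g, y₀⟫_ℝ) := by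
    rw [inner_sub_left, real_inner_comm y g, real_inner_comm y₀ g]
  constructor
  · have : t * ⟪g, y⟫_ℝ ≤ t * ⟪g, y₀⟫_ℝ := by linarith
    have := le_of_mul_le_mul_left this ht
    rw [key]; linarith
  · intro hy₀not
    have h1' : ⟪ω + t • g, y⟫_ℝ < ⟪ω + t • g, y₀⟫_ℝ := by
      by_contra h
      push_neg at h
      exact hy₀not ⟨hy₀Y, fun y' hy' => le_trans h (hminy y' hy')⟩
    rw [expand, expand] at h1'
    have : t * ⟪g, y⟫_ℝ < t * ⟪g, y₀⟫_ℝ := by linarith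
    have := lt_of_mul_lt_mul_left this ht.le
    rw [key]; linarith
end

section
/- Let Y be a finite nonempty subset of ℝⁿ and let P : ℝⁿ → ℝⁿ be a linear idempotent map (P ∘ P = P) such that M(P(ω)) = M(ω) for every ω ∈ ℝⁿ. Then for every ω, δ ∈ ℝⁿ and every α > 0, M(ω − α·δ) = M(ω − α·P(δ)); that is, only the component P(δ) of the update affects the updated optimization problem, and the component of δ in the kernel of P is irrelevant. -/
open scoped InnerProductSpace

theorem kernel_component_of_update_is_irrelevant {n : ℕ}
    (Y : Finset (EuclideanSpace ℝ (Fin n))) (hY : Y.Nonempty)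
    (P : EuclideanSpace ℝ (Fin n) →ₗ[ℝ] EuclideanSpace ℝ (Fin n))
    (hidem : ∀ x, P (P x) = P x)
    (hinv : ∀ ω, argminSet Y (P ω) = argminSet Y ω) :
    ∀ (ω δ : EuclideanSpace ℝ (Fin n)) (α : ℝ), 0 < α →
      argminSet Y (ω - α • δ) = argminSet Y (ω - α • P δ) := by
  intro ω δ α _
  rw [← hinv (ω - α • δ), ← hinv (ω - α • P δ)]
  simp [map_sub, map_smul, hidem]
end
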